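/- arXiv:2209.14278 — 2 statements merged into one kernel-verified Lean document; each statement's English description precedes it below -/
import Mathlib

section
/- Let F(x) = Σ_{j=−L}^{L} c_j e^{ijx} be a trigonometric polynomial that is real-valued on ℝ and satisfies |F(x)| ≤ 1 for all x ∈ ℝ. Then there exist ω ∈ ℝ and θ, φ ∈ ℝ^{L+1} such that for all x ∈ ℝ, ⟨e_0, W^L_{ω,θ,φ}(x)† · Z · W^L_{ω,θ,φ}(x) e_0⟩ = F(x), where Z = diag(1, −1) and e_0 = (1,0)ᵀ. -/
/-!
Write `F(x) = e^{-iLx} q(e^{ix})` with `deg q ≤ 2L`. Since `-1 ≤ F ≤ 1`, both `(1 ± F)/2` are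
nonnegative trigonometric polynomials, so by the Fejér–Riesz theorem `(1 + F)/2 = |P(e^{ix})|²`
and `(1 - F)/2 = |Q(e^{ix})|²` with `deg P, deg Q ≤ L`. Then `|P|² + |Q|² = 1` on the unit circle
and `F = |P|² - |Q|²`.

Fejér–Riesz goes by induction on `L`: realness makes the roots of `q` come in pairs `ζ, 1/ζ̄`,
a root on the circle is double because a nonnegative function has zero derivative where it
vanishes, and each pair splits off a factor `|e^{ix} - ζ|²`.

The first column of `W(x)` is made equal to `e^{-iLx/2} (P, Q)(e^{ix})` by peeling off one layer
at a time: `|P|² + |Q|² = 1` forces `P_L P̄_0 + Q_L Q̄_0 = 0`, which yields a unit vector `(α, β)`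
such that `αP + βQ` has degree `< L` and `-β̄P + ᾱQ` vanishes at `0`, and the unitary
`[[ᾱ, -β], [β̄, α]]` is a product `R_z R_y R_z`. Finally `(W† Z W)₀₀ = |W₀₀|² - |W₁₀|²`.
-/

open scoped Matrix

/-- `R_z(φ) = diag(e^{-iφ/2}, e^{iφ/2})`. -/
noncomputable def Rz (φ : ℝ) : Matrix (Fin 2) (Fin 2) ℂ :=
  !![Complex.exp (-(Complex.I * φ / 2)), 0; 0, Complex.exp (Complex.I * φ / 2)]

/-- `R_y(θ)`, the real rotation by angle `θ/2`, viewed as a complex matrix. -/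
noncomputable def Ry (θ : ℝ) : Matrix (Fin 2) (Fin 2) ℂ :=
  !![(Real.cos (θ / 2) : ℂ), -(Real.sin (θ / 2) : ℂ);
     (Real.sin (θ / 2) : ℂ), (Real.cos (θ / 2) : ℂ)]

/-- The trigonometric QSP unitary
`W^L_{ω,θ,φ}(x) = R_z(ω) R_y(θ_0) R_z(φ_0) ∏_{l=1}^{L} [R_z(x) R_y(θ_l) R_z(φ_l)]`,
multiplied left to right in increasing `l`. -/
noncomputable def Wqsp (L : ℕ) (ω : ℝ) (θ φ : ℕ → ℝ) (x : ℝ) :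
    Matrix (Fin 2) (Fin 2) ℂ :=
  Rz ω * Ry (θ 0) * Rz (φ 0) *
    ((List.range L).map (fun l => Rz x * Ry (θ (l + 1)) * Rz (φ (l + 1)))).prod

open Polynomial Complex ComplexConjugate Set
-- With `ComplexOrder`, `0 ≤ z` means that `z` is a nonnegative real number.
open scoped ComplexOrder

noncomputable def expI (x : ℝ) : ℂ := exp (x * I)

lemma expI_ne_zero (x : ℝ) : expI x ≠ 0 := exp_ne_zero _

lemma norm_expI (x : ℝ) : ‖expI x‖ = 1 := norm_exp_ofReal_mul_I x

lemma expI_add (x y : ℝ) : expI (x + y) = expI x * expI y := by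
  simp only [expI, ofReal_add, add_mul, exp_add]

lemma expI_neg (x : ℝ) : expI (-x) = (expI x)⁻¹ := by
  rw [expI, ofReal_neg, neg_mul, exp_neg, expI]

lemma conj_expI (x : ℝ) : conj (expI x) = (expI x)⁻¹ := by
  rw [expI, ← exp_conj, ← exp_neg]; simp

lemma expI_half_sq (x : ℝ) : expI (x / 2) ^ 2 = expI x := by
  rw [sq, ← expI_add, add_halves]

lemma continuous_expI : Continuous expI := by unfold expI; fun_prop

lemma hasDerivAt_expI (x : ℝ) : HasDerivAt expI (I * expI x) x := by
  have h := ((hasDerivAt_id x).ofReal_comp.mul_const I).cexp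
  rw [id, ofReal_one, one_mul] at h
  rw [mul_comm]
  exact h

lemma expI_injOn (a : ℝ) : InjOn expI (Ico a (a + 2 * Real.pi)) := by
  intro x hx y hy h
  exact Circle.exp_injOn_Ico (by linarith) hx hy (Subtype.ext (by simpa [expI] using h))

lemma eq_zero_of_eval_expI_eq_zero {q : ℂ[X]} (h : ∀ x, q.eval (expI x) = 0) : q = 0 :=
  q.eq_zero_of_infinite_isRoot <| infinite_of_injOn_mapsTo (expI_injOn 0)
    (fun x _ => h x) (Ico_infinite (by positivity))

lemma norm_mul_expI_arg (z : ℂ) : (‖z‖ : ℂ) * expI (arg z) = z := norm_mul_exp_arg_mul_I z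

lemma norm_mul_expI_neg_arg (z : ℂ) : (‖z‖ : ℂ) * expI (-arg z) = conj z := by
  conv_rhs => rw [← norm_mul_expI_arg z]
  rw [map_mul, conj_ofReal, conj_expI, expI_neg]

noncomputable def conjReflect (n : ℕ) (q : ℂ[X]) : ℂ[X] := reflect n (q.map (starRingEnd ℂ))

lemma coeff_conjReflect {n k : ℕ} (q : ℂ[X]) (hk : k ≤ n) :
    (conjReflect n q).coeff k = conj (q.coeff (n - k)) := by
  rw [conjReflect, coeff_reflect, revAt_le hk, coeff_map]

lemma natDegree_conjReflect_le {n : ℕ} {q : ℂ[X]} (hq : q.natDegree ≤ n) :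
    (conjReflect n q).natDegree ≤ n :=
  natDegree_reflect_le.trans (max_le le_rfl ((natDegree_map_le).trans hq))

lemma eval_conjReflect {n : ℕ} {q : ℂ[X]} (hq : q.natDegree ≤ n) {z : ℂ} (hz : z ≠ 0) :
    (conjReflect n q).eval z = z ^ n * conj (q.eval (conj z)⁻¹) := by
  let := invertibleOfNonzero (inv_ne_zero hz)
  have h := eval₂_reflect_mul_pow (RingHom.id ℂ) z⁻¹ n (q.map (starRingEnd ℂ))
    ((natDegree_map_le).trans hq)
  rw [invOf_eq_inv, inv_inv, eval₂_id, eval₂_id, eval_map, ← conjReflect,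
    show z⁻¹ = conj (conj z)⁻¹ by simp, eval₂_hom] at h
  rw [← h, map_inv₀, Complex.conj_conj, inv_pow, mul_left_comm, mul_inv_cancel₀ (pow_ne_zero _ hz),
    mul_one]

lemma eval_conjReflect_expI {n : ℕ} {q : ℂ[X]} (hq : q.natDegree ≤ n) (x : ℝ) :
    (conjReflect n q).eval (expI x) = expI x ^ n * conj (q.eval (expI x)) := by
  rw [eval_conjReflect hq (expI_ne_zero x), conj_expI, inv_inv]

/-- The trigonometric polynomial `∑ₖ qₖ e^{i(k-L)x}`. -/
noncomputable def trigOf (L : ℕ) (q : ℂ[X]) (x : ℝ) : ℂ := q.eval (expI x) / expI x ^ L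

lemma continuous_trigOf (L : ℕ) (q : ℂ[X]) : Continuous (trigOf L q) :=
  (q.continuous.comp continuous_expI).div (continuous_expI.pow L)
    fun x => pow_ne_zero _ (expI_ne_zero x)

lemma HasDerivAt.eq_zero_of_nonneg {f : ℝ → ℂ} {f' : ℂ} {t : ℝ} (hf : HasDerivAt f f' t)
    (hf0 : ∀ x, 0 ≤ f x) (ht : f t = 0) : f' = 0 := by
  have hmin : IsLocalMin (fun x => (f x).re) t :=
    Filter.Eventually.of_forall fun x => by simpa [ht] using (nonneg_iff.1 (hf0 x)).1
  have him : HasDerivAt (fun x => (f x).im) f'.im t := imCLM.hasFDerivAt.comp_hasDerivAt t hf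
  rw [show (fun x => (f x).im) = fun _ => 0 from funext fun x => (nonneg_iff.1 (hf0 x)).2.symm]
    at him
  exact Complex.ext (hmin.hasDerivAt_eq_zero (reCLM.hasFDerivAt.comp_hasDerivAt t hf))
    ((hasDerivAt_const t (0 : ℝ)).unique him).symm

lemma isRoot_derivative_of_trigOf_nonneg {L : ℕ} {q : ℂ[X]} (h0 : ∀ x, 0 ≤ trigOf L q x)
    {t : ℝ} (ht : q.IsRoot (expI t)) : q.derivative.IsRoot (expI t) := by
  have hd := ((q.hasDerivAt (expI t)).comp t (hasDerivAt_expI t)).div ((hasDerivAt_expI t).pow L)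
    (pow_ne_zero L (expI_ne_zero t))
  have h := hd.eq_zero_of_nonneg h0 (by simp [ht.eq_zero])
  simpa [ht.eq_zero, expI_ne_zero, I_ne_zero] using h

lemma sq_dvd_of_trigOf_nonneg {L : ℕ} {q : ℂ[X]} (h0 : ∀ x, 0 ≤ trigOf L q x)
    {t : ℝ} (ht : q.IsRoot (expI t)) : (X - C (expI t)) ^ 2 ∣ q := by
  rcases eq_or_ne q 0 with rfl | hq
  · exact dvd_zero _
  exact (le_rootMultiplicity_iff hq).1 <|
    (one_lt_rootMultiplicity_iff_isRoot hq).2 ⟨ht, isRoot_derivative_of_trigOf_nonneg h0 ht⟩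

lemma nonneg_of_forall_expI_ne {g : ℝ → ℂ} (hg : Continuous g) {ζ : ℂ}
    (h : ∀ x, expI x ≠ ζ → 0 ≤ g x) (x : ℝ) : 0 ≤ g x := by
  by_cases hx : expI x = ζ
  · have hsub : Ioo x (x + 2 * Real.pi) ⊆ {y | 0 ≤ g y} := fun y hy =>
      h y fun hyζ => hy.1.ne' <| expI_injOn x ⟨hy.1.le, hy.2⟩
        ⟨le_rfl, by linarith [Real.pi_pos]⟩ (hyζ.trans hx.symm)
    refine (isClosed_le continuous_const hg).closure_subset_iff.2 hsub ?_
    rw [closure_Ioo (by linarith [Real.pi_pos])]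
    exact ⟨le_rfl, by linarith [Real.pi_pos]⟩
  · exact h x hx

lemma conjReflect_eq_self_of_real {L : ℕ} {q : ℂ[X]} (hq : q.natDegree ≤ 2 * L)
    (hreal : ∀ x, conj (trigOf L q x) = trigOf L q x) : conjReflect (2 * L) q = q := by
  rw [← sub_eq_zero]
  refine eq_zero_of_eval_expI_eq_zero fun x => ?_
  have h := hreal x
  simp only [trigOf, map_div₀, map_pow, conj_expI, inv_pow, div_inv_eq_mul] at h
  rw [eval_sub, eval_conjReflect_expI hq, sub_eq_zero, pow_mul]
  field_simp [expI_ne_zero] at h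
  linear_combination h

lemma Polynomial.IsRoot.conj_inv {n : ℕ} {q : ℂ[X]} (hq : q.natDegree ≤ n)
    (hsym : conjReflect n q = q) {ζ : ℂ} (hζ : q.IsRoot ζ) (hζ0 : ζ ≠ 0) : q.IsRoot (conj ζ)⁻¹ := by
  have h := eval_conjReflect hq (inv_ne_zero ((_root_.map_ne_zero (starRingEnd ℂ)).2 hζ0))
  rw [hsym, map_inv₀, Complex.conj_conj, inv_inv, hζ.eq_zero, map_zero, mul_zero] at h
  exact h

lemma norm_eq_one_of_conj_inv_eq {ζ : ℂ} (hζ0 : ζ ≠ 0) (h : (conj ζ)⁻¹ = ζ) : ‖ζ‖ = 1 := by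
  have h1 : ζ * conj ζ = 1 := by
    rw [← inv_mul_cancel₀ ((_root_.map_ne_zero (starRingEnd ℂ)).2 hζ0), h]
  rw [mul_conj'] at h1
  exact (pow_eq_one_iff_of_nonneg (norm_nonneg ζ) two_ne_zero).1 (by exact_mod_cast h1)

lemma X_sub_C_mul_X_sub_C_conj_inv_dvd {L : ℕ} {q : ℂ[X]} (hq : q.natDegree ≤ 2 * L)
    (h0 : ∀ x, 0 ≤ trigOf L q x) {ζ : ℂ} (hζ : q.IsRoot ζ) (hζ0 : ζ ≠ 0) :
    (X - C ζ) * (X - C (conj ζ)⁻¹) ∣ q := by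
  have hsym := conjReflect_eq_self_of_real hq fun x => (IsSelfAdjoint.of_nonneg (h0 x)).star_eq
  by_cases h : (conj ζ)⁻¹ = ζ
  · obtain ⟨t, rfl⟩ : ∃ t, expI t = ζ := ⟨arg ζ, by
      simpa [norm_eq_one_of_conj_inv_eq hζ0 h] using norm_mul_expI_arg ζ⟩
    rw [h, ← sq]
    exact sq_dvd_of_trigOf_nonneg h0 hζ
  · exact (isCoprime_X_sub_C_of_isUnit_sub (sub_ne_zero.2 (Ne.symm h)).isUnit).mul_dvd
      (dvd_iff_isRoot.2 hζ) (dvd_iff_isRoot.2 (hζ.conj_inv hq hsym hζ0))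

lemma trigOf_succ_X_mul (L : ℕ) (r : ℂ[X]) (x : ℝ) :
    trigOf (L + 1) (X * r) x = trigOf L r x := by
  simp only [trigOf, eval_mul, eval_X, pow_succ']
  exact mul_div_mul_left _ _ (expI_ne_zero x)

lemma trigOf_succ_pair_mul (L : ℕ) {ζ : ℂ} (hζ0 : ζ ≠ 0) (r : ℂ[X]) (x : ℝ) :
    trigOf (L + 1) ((X - C ζ) * (X - C (conj ζ)⁻¹) * r) x =
      (‖expI x - ζ‖ ^ 2 : ℝ) * trigOf L (C (-(conj ζ)⁻¹) * r) x := by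
  have hζ : conj ζ ≠ 0 := (_root_.map_ne_zero (starRingEnd ℂ)).2 hζ0
  push_cast
  rw [← mul_conj', map_sub, conj_expI]
  simp only [trigOf, eval_mul, eval_sub, eval_X, eval_C, pow_succ]
  field_simp [expI_ne_zero]
  ring

lemma nonneg_of_ofReal_mul_nonneg {a : ℝ} (ha : 0 < a) {w : ℂ} (h : 0 ≤ (a : ℂ) * w) :
    0 ≤ w := by
  have := mul_nonneg (zero_le_real.2 (inv_nonneg.2 ha.le)) h
  rwa [ofReal_inv, inv_mul_cancel_left₀ (ofReal_ne_zero.2 ha.ne')] at this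

lemma exists_trigOf_succ_eq_norm_sq_mul {L : ℕ} {q : ℂ[X]} (hq : q.natDegree ≤ 2 * (L + 1))
    (h0 : ∀ x, 0 ≤ trigOf (L + 1) q x) :
    ∃ a r : ℂ[X], a.natDegree ≤ 1 ∧ r.natDegree ≤ 2 * L ∧ (∀ x, 0 ≤ trigOf L r x) ∧
      ∀ x, trigOf (L + 1) q x = (‖a.eval (expI x)‖ ^ 2 : ℝ) * trigOf L r x := by
  have hsym := conjReflect_eq_self_of_real hq fun x => (IsSelfAdjoint.of_nonneg (h0 x)).star_eq
  have htop : q.coeff (2 * (L + 1)) = conj (q.coeff 0) := by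
    simpa [hsym] using coeff_conjReflect (n := 2 * (L + 1)) q le_rfl
  by_cases hc : q.coeff 0 = 0
  · have hdeg : q.divX.natDegree ≤ 2 * L := by
      have := natDegree_le_pred hq (by rw [htop, hc, map_zero])
      rw [natDegree_divX_eq_natDegree_tsub_one]
      omega
    have hX : trigOf (L + 1) q = trigOf L q.divX := by
      have hq' : X * q.divX = q := by simpa [hc] using X_mul_divX_add q
      funext x
      rw [← trigOf_succ_X_mul L q.divX, hq']
    exact ⟨1, q.divX, by simp, hdeg, hX ▸ h0, fun x => by simp [hX]⟩
  · have hq0 : q ≠ 0 := fun h => hc (by simp [h])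
    have hdeg : q.natDegree = 2 * (L + 1) :=
      le_antisymm hq (le_natDegree_of_ne_zero (by simpa [htop] using hc))
    obtain ⟨ζ, hζ⟩ := exists_root (natDegree_pos_iff_degree_pos (p := q) |>.1 (by omega))
    have hζ0 : ζ ≠ 0 := by
      rintro rfl
      exact hc (by rwa [coeff_zero_eq_eval_zero])
    obtain ⟨r, rfl⟩ := X_sub_C_mul_X_sub_C_conj_inv_dvd hq h0 hζ hζ0
    have hr0 : r ≠ 0 := by rintro rfl; simp at hq0
    have hrdeg : (C (-(conj ζ)⁻¹) * r).natDegree ≤ 2 * L := by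
      rw [natDegree_mul (mul_ne_zero (X_sub_C_ne_zero _) (X_sub_C_ne_zero _)) hr0,
        natDegree_mul (X_sub_C_ne_zero _) (X_sub_C_ne_zero _), natDegree_X_sub_C,
        natDegree_X_sub_C] at hdeg
      exact natDegree_C_mul_le _ _ |>.trans (by omega)
    refine ⟨X - C ζ, _, natDegree_X_sub_C_le _, hrdeg, ?_, fun x => by
      simp [trigOf_succ_pair_mul L hζ0]⟩
    refine nonneg_of_forall_expI_ne (ζ := ζ) (continuous_trigOf _ _) fun x hx => ?_
    refine nonneg_of_ofReal_mul_nonneg (pow_pos (norm_pos_iff.2 (sub_ne_zero.2 hx)) 2) ?_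
    rw [← trigOf_succ_pair_mul L hζ0]
    exact h0 x

theorem exists_trigOf_eq_norm_sq (L : ℕ) {q : ℂ[X]} (hq : q.natDegree ≤ 2 * L)
    (h0 : ∀ x, 0 ≤ trigOf L q x) :
    ∃ p : ℂ[X], p.natDegree ≤ L ∧ ∀ x, trigOf L q x = (‖p.eval (expI x)‖ ^ 2 : ℝ) := by
  induction L generalizing q with
  | zero =>
    obtain ⟨c, rfl⟩ : ∃ c, q = C c := ⟨_, eq_C_of_natDegree_le_zero hq⟩
    have hc : 0 ≤ c := by simpa [trigOf] using h0 0
    refine ⟨C (Real.sqrt ‖c‖ : ℂ), by simp, fun x => ?_⟩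
    rw [eval_C, norm_real, Real.norm_of_nonneg (Real.sqrt_nonneg _),
      Real.sq_sqrt (norm_nonneg _), norm_of_nonneg' hc]
    simp [trigOf]
  | succ L ih =>
    obtain ⟨a, r, ha, hr, hr0, hqr⟩ := exists_trigOf_succ_eq_norm_sq_mul hq h0
    obtain ⟨p, hp, hpr⟩ := ih hr hr0
    refine ⟨a * p, natDegree_mul_le.trans (by omega), fun x => ?_⟩
    rw [hqr, hpr, eval_mul, norm_mul, mul_pow, ofReal_mul]

lemma exists_trigOf_eq_sum (L : ℕ) (c : ℤ → ℂ) :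
    ∃ q : ℂ[X], q.natDegree ≤ 2 * L ∧ ∀ x : ℝ,
      trigOf L q x = ∑ j ∈ Finset.Icc (-(L : ℤ)) L, c j * exp (I * j * x) := by
  refine ⟨∑ j ∈ Finset.Icc (-(L : ℤ)) L, C (c j) * X ^ (j + L).toNat, ?_, fun x => ?_⟩
  · refine natDegree_sum_le_of_forall_le _ _ fun j hj => ?_
    rw [Finset.mem_Icc] at hj
    exact natDegree_C_mul_X_pow_le _ _ |>.trans (by omega)
  · simp only [trigOf, eval_finsetSum, eval_mul, eval_C, eval_pow, eval_X, Finset.sum_div]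
    refine Finset.sum_congr rfl fun j hj => ?_
    rw [Finset.mem_Icc] at hj
    have := expI_ne_zero x
    rw [mul_div_assoc, show I * j * x = j * (x * I) by ring, exp_int_mul, ← expI,
      ← zpow_natCast, ← zpow_natCast, ← zpow_sub₀ this, Int.toNat_of_nonneg (by omega),
      add_sub_cancel_right]

lemma trigOf_half_X_pow_add (L : ℕ) (s : ℂ) (q : ℂ[X]) (x : ℝ) :
    trigOf L (C 2⁻¹ * (X ^ L + C s * q)) x = 2⁻¹ * (1 + s * trigOf L q x) := by
  have := pow_ne_zero L (expI_ne_zero x)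
  simp only [trigOf, eval_mul, eval_C, eval_add, eval_pow, eval_X]
  field_simp

theorem exists_trigOf_eq_norm_sq_sub_norm_sq {L : ℕ} {q : ℂ[X]} (hq : q.natDegree ≤ 2 * L)
    (h1 : ∀ x, -1 ≤ trigOf L q x ∧ trigOf L q x ≤ 1) :
    ∃ P Q : ℂ[X], P.natDegree ≤ L ∧ Q.natDegree ≤ L ∧
      (∀ x, ‖P.eval (expI x)‖ ^ 2 + ‖Q.eval (expI x)‖ ^ 2 = 1) ∧
      ∀ x, trigOf L q x = (‖P.eval (expI x)‖ ^ 2 - ‖Q.eval (expI x)‖ ^ 2 : ℝ) := by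
  have hdeg (s : ℂ) : (C 2⁻¹ * (X ^ L + C s * q)).natDegree ≤ 2 * L :=
    natDegree_C_mul_le _ _ |>.trans <| natDegree_add_le_of_degree_le
      ((natDegree_X_pow_le L).trans (by omega)) (natDegree_C_mul_le _ _ |>.trans hq)
  obtain ⟨P, hP, hPq⟩ := exists_trigOf_eq_norm_sq L (hdeg 1) fun x => by
    rw [trigOf_half_X_pow_add, one_mul]
    exact mul_nonneg (by positivity) (neg_le_iff_add_nonneg'.1 (h1 x).1)
  obtain ⟨Q, hQ, hQq⟩ := exists_trigOf_eq_norm_sq L (hdeg (-1)) fun x => by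
    rw [trigOf_half_X_pow_add, neg_one_mul, ← sub_eq_add_neg]
    exact mul_nonneg (by positivity) (sub_nonneg.2 (h1 x).2)
  have hPQ (x : ℝ) : ((‖P.eval (expI x)‖ ^ 2 : ℝ) : ℂ) = 2⁻¹ * (1 + trigOf L q x) ∧
      ((‖Q.eval (expI x)‖ ^ 2 : ℝ) : ℂ) = 2⁻¹ * (1 - trigOf L q x) := by
    rw [← hPq, ← hQq, trigOf_half_X_pow_add, trigOf_half_X_pow_add, one_mul, neg_one_mul,
      sub_eq_add_neg]
    exact ⟨rfl, rfl⟩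
  refine ⟨P, Q, hP, hQ, fun x => ?_, fun x => ?_⟩
  · exact_mod_cast (by rw [ofReal_add, (hPQ x).1, (hPQ x).2]; ring :
      ((‖P.eval (expI x)‖ ^ 2 + ‖Q.eval (expI x)‖ ^ 2 : ℝ) : ℂ) = 1)
  · rw [ofReal_sub, (hPQ x).1, (hPQ x).2]
    ring

lemma Rz_eq (φ : ℝ) : Rz φ = !![expI (-(φ / 2)), 0; 0, expI (φ / 2)] := by
  simp only [Rz, expI]
  congr 3 <;> push_cast <;> ring_nf

lemma Rz_add (s t : ℝ) : Rz (s + t) = Rz s * Rz t := by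
  simp only [Rz_eq, Matrix.mul_fin_two, ← expI_add]
  congr 3 <;> ring_nf

lemma Rz_mul_Ry_mul_Rz (α β θ : ℝ) :
    Rz (β - α) * Ry θ * Rz (-α - β) =
      !![Real.cos (θ / 2) * expI α, -(Real.sin (θ / 2) * expI (-β));
         Real.sin (θ / 2) * expI β, Real.cos (θ / 2) * expI (-α)] := by
  simp only [Rz_eq, Ry, Matrix.mul_fin_two, mul_zero, zero_mul, add_zero, zero_add]
  ext i j
  fin_cases i <;> fin_cases j <;> simp only [Fin.zero_eta, Fin.mk_one, Matrix.of_apply,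
    Matrix.cons_val_zero, Matrix.cons_val_one, mul_right_comm _ _ (expI _), ← expI_add,
    mul_neg, neg_mul] <;> ring_nf

lemma exists_Rz_mul_Ry_mul_Rz_eq {a b : ℂ} (hab : ‖a‖ ^ 2 + ‖b‖ ^ 2 = 1) :
    ∃ ω θ φ : ℝ, Rz ω * Ry θ * Rz φ = !![a, -conj b; b, conj a] := by
  refine ⟨arg b - arg a, 2 * Real.arccos ‖a‖, -arg a - arg b, ?_⟩
  have ha : ‖a‖ ≤ 1 := by nlinarith [norm_nonneg a, norm_nonneg b]
  have hθ : 2 * Real.arccos ‖a‖ / 2 = Real.arccos ‖a‖ := by ring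
  rw [Rz_mul_Ry_mul_Rz, hθ, Real.cos_arccos (by linarith [norm_nonneg a]) ha, Real.sin_arccos,
    show 1 - ‖a‖ ^ 2 = ‖b‖ ^ 2 by linarith, Real.sqrt_sq (norm_nonneg b), norm_mul_expI_arg,
    norm_mul_expI_arg, norm_mul_expI_neg_arg, norm_mul_expI_neg_arg]

lemma Wqsp_zero (ω : ℝ) (θ φ : ℕ → ℝ) (x : ℝ) :
    Wqsp 0 ω θ φ x = Rz ω * Ry (θ 0) * Rz (φ 0) := by
  simp [Wqsp]

lemma Wqsp_succ_cons (L : ℕ) (ω θ₀ φ₀ ω' : ℝ) (θ φ : ℕ → ℝ) (x : ℝ) :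
    Wqsp (L + 1) ω (fun | 0 => θ₀ | n + 1 => θ n) (fun | 0 => φ₀ + ω' | n + 1 => φ n) x =
      Rz ω * Ry θ₀ * Rz φ₀ * (Rz x * Wqsp L ω' θ φ x) := by
  have h : Rz (φ₀ + ω') * Rz x = Rz φ₀ * Rz x * Rz ω' := by
    rw [← Rz_add, ← Rz_add, ← Rz_add, add_right_comm]
  simp only [Wqsp, List.range_succ_eq_map, List.map_cons, List.prod_cons, List.map_map,
    Function.comp_def, Nat.succ_eq_add_one, ← mul_assoc]
  rw [mul_assoc (Rz ω * Ry θ₀), h]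
  simp only [← mul_assoc]

lemma Rz_mul_apply_zero (x : ℝ) (M : Matrix (Fin 2) (Fin 2) ℂ) :
    (Rz x * M) 0 0 = expI (-(x / 2)) * M 0 0 := by
  simp [Rz_eq, Matrix.mul_apply, Fin.sum_univ_two]

lemma Rz_mul_apply_one (x : ℝ) (M : Matrix (Fin 2) (Fin 2) ℂ) :
    (Rz x * M) 1 0 = expI (x / 2) * M 1 0 := by
  simp [Rz_eq, Matrix.mul_apply, Fin.sum_univ_two]

lemma exists_unit_mulVec_eq_zero {a b c d : ℂ} (h : a * d - b * c = 0) :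
    ∃ α β : ℂ, ‖α‖ ^ 2 + ‖β‖ ^ 2 = 1 ∧ a * α + b * β = 0 ∧ c * α + d * β = 0 := by
  obtain ⟨v, hv, hMv⟩ := Matrix.exists_mulVec_eq_zero_iff.2
    (by rwa [Matrix.det_fin_two_of] : (!![a, b; c, d]).det = 0)
  have hs : 0 < ‖v 0‖ ^ 2 + ‖v 1‖ ^ 2 := by
    obtain ⟨i, hi⟩ := Function.ne_iff.1 hv
    fin_cases i
    · have := norm_pos_iff.2 hi; positivity
    · have := norm_pos_iff.2 hi; positivity
  have hs' : (√(‖v 0‖ ^ 2 + ‖v 1‖ ^ 2) : ℂ) ≠ 0 := ofReal_ne_zero.2 (Real.sqrt_pos.2 hs).ne'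
  have h0 := congrFun hMv 0
  have h1 := congrFun hMv 1
  simp only [Matrix.mulVec, dotProduct, Fin.sum_univ_two, Matrix.of_apply, Matrix.cons_val',
    Matrix.cons_val_zero, Matrix.cons_val_one, Matrix.empty_val', Matrix.cons_val_fin_one,
    Pi.zero_apply] at h0 h1
  refine ⟨v 0 / √(‖v 0‖ ^ 2 + ‖v 1‖ ^ 2), v 1 / √(‖v 0‖ ^ 2 + ‖v 1‖ ^ 2), ?_, ?_, ?_⟩
  · rw [norm_div, norm_div, norm_real, Real.norm_of_nonneg (Real.sqrt_nonneg _), div_pow,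
      div_pow, Real.sq_sqrt hs.le, ← add_div, div_self hs.ne']
  · field_simp
    linear_combination h0
  · field_simp
    linear_combination h1

lemma coeff_mul_conj_add_coeff_mul_conj_eq_zero {n : ℕ} (hn : n ≠ 0) {P Q : ℂ[X]}
    (hP : P.natDegree ≤ n) (hQ : Q.natDegree ≤ n)
    (hPQ : ∀ x, ‖P.eval (expI x)‖ ^ 2 + ‖Q.eval (expI x)‖ ^ 2 = 1) :
    P.coeff n * conj (P.coeff 0) + Q.coeff n * conj (Q.coeff 0) = 0 := by
  have hpoly : P * conjReflect n P + Q * conjReflect n Q = X ^ n := by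
    rw [← sub_eq_zero]
    refine eq_zero_of_eval_expI_eq_zero fun x => ?_
    have h : (‖P.eval (expI x)‖ : ℂ) ^ 2 + (‖Q.eval (expI x)‖ : ℂ) ^ 2 = 1 := by
      exact_mod_cast hPQ x
    rw [← mul_conj', ← mul_conj'] at h
    simp only [eval_sub, eval_add, eval_mul, eval_pow, eval_X, eval_conjReflect_expI hP,
      eval_conjReflect_expI hQ]
    linear_combination expI x ^ n * h
  have h := congrArg (coeff · (n + n)) hpoly
  simp only [coeff_add, coeff_mul_add_eq_of_natDegree_le hP (natDegree_conjReflect_le hP),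
    coeff_mul_add_eq_of_natDegree_le hQ (natDegree_conjReflect_le hQ),
    coeff_conjReflect _ le_rfl, Nat.sub_self, coeff_X_pow] at h
  simpa [hn] using h

lemma norm_sq_add_norm_sq_unitary {α β : ℂ} (hαβ : ‖α‖ ^ 2 + ‖β‖ ^ 2 = 1) (u v : ℂ) :
    ‖conj α * u - β * v‖ ^ 2 + ‖conj β * u + α * v‖ ^ 2 = ‖u‖ ^ 2 + ‖v‖ ^ 2 := by
  have h : (‖α‖ : ℂ) ^ 2 + (‖β‖ : ℂ) ^ 2 = 1 := by exact_mod_cast hαβ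
  apply ofReal_injective
  push_cast
  simp only [← mul_conj', map_sub, map_add, map_mul, Complex.conj_conj] at h ⊢
  linear_combination (u * conj u + v * conj v) * h

lemma exists_strip_layer {L : ℕ} {P Q : ℂ[X]} (hP : P.natDegree ≤ L + 1)
    (hQ : Q.natDegree ≤ L + 1) (hPQ : ∀ x, ‖P.eval (expI x)‖ ^ 2 + ‖Q.eval (expI x)‖ ^ 2 = 1) :
    ∃ (α β : ℂ) (P' Q' : ℂ[X]), ‖α‖ ^ 2 + ‖β‖ ^ 2 = 1 ∧ P'.natDegree ≤ L ∧
      Q'.natDegree ≤ L ∧ ∀ z, P.eval z = conj α * P'.eval z - β * (z * Q'.eval z) ∧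
        Q.eval z = conj β * P'.eval z + α * (z * Q'.eval z) := by
  obtain ⟨α, β, hαβ, htop, hbot⟩ := exists_unit_mulVec_eq_zero
    (a := P.coeff (L + 1)) (b := Q.coeff (L + 1)) (c := conj (Q.coeff 0))
    (d := -conj (P.coeff 0))
    (by linear_combination -coeff_mul_conj_add_coeff_mul_conj_eq_zero L.succ_ne_zero hP hQ hPQ)
  set S := C (-conj β) * P + C (conj α) * Q with hS
  have hS0 : S.coeff 0 = 0 := by
    have h := congrArg conj hbot
    simp only [map_add, map_mul, map_neg, Complex.conj_conj, map_zero] at h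
    simp only [hS, coeff_add, coeff_C_mul]
    linear_combination h
  have hαβ' : α * conj α + β * conj β = 1 := by
    rw [mul_conj', mul_conj']; exact_mod_cast hαβ
  refine ⟨α, β, C α * P + C β * Q, S.divX, hαβ, ?_, ?_, fun z => ?_⟩
  · refine natDegree_le_pred (n := L + 1) ?_ ?_
    · exact natDegree_add_le_of_degree_le (natDegree_C_mul_le _ _ |>.trans hP)
        (natDegree_C_mul_le _ _ |>.trans hQ)
    · simp only [coeff_add, coeff_C_mul]
      linear_combination htop
  · rw [natDegree_divX_eq_natDegree_tsub_one]
    have : S.natDegree ≤ L + 1 := natDegree_add_le_of_degree_le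
      (natDegree_C_mul_le _ _ |>.trans hP) (natDegree_C_mul_le _ _ |>.trans hQ)
    omega
  · have hX : z * S.divX.eval z = S.eval z := by
      simpa [hS0] using congrArg (eval z) (X_mul_divX_add S)
    rw [hX, hS]
    simp only [eval_add, eval_mul, eval_C]
    constructor
    · linear_combination -(P.eval z) * hαβ'
    · linear_combination -(Q.eval z) * hαβ'

theorem exists_Wqsp_col_eq (L : ℕ) {P Q : ℂ[X]} (hP : P.natDegree ≤ L) (hQ : Q.natDegree ≤ L)
    (hPQ : ∀ x, ‖P.eval (expI x)‖ ^ 2 + ‖Q.eval (expI x)‖ ^ 2 = 1) :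
    ∃ (ω : ℝ) (θ φ : ℕ → ℝ), ∀ x,
      Wqsp L ω θ φ x 0 0 = expI (-(x / 2)) ^ L * P.eval (expI x) ∧
      Wqsp L ω θ φ x 1 0 = expI (-(x / 2)) ^ L * Q.eval (expI x) := by
  induction L generalizing P Q with
  | zero =>
    obtain ⟨a, rfl⟩ : ∃ a, P = C a := ⟨_, eq_C_of_natDegree_le_zero hP⟩
    obtain ⟨b, rfl⟩ : ∃ b, Q = C b := ⟨_, eq_C_of_natDegree_le_zero hQ⟩
    obtain ⟨ω, θ, φ, hU⟩ := exists_Rz_mul_Ry_mul_Rz_eq (by simpa using hPQ 0)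
    exact ⟨ω, fun _ => θ, fun _ => φ, fun x => by simp [Wqsp_zero, hU]⟩
  | succ L ih =>
    obtain ⟨α, β, P', Q', hαβ, hP', hQ', hPQ'⟩ := exists_strip_layer hP hQ hPQ
    obtain ⟨ω', θ, φ, hW⟩ := ih hP' hQ' fun x => by
      rw [← hPQ x, (hPQ' _).1, (hPQ' _).2, norm_sq_add_norm_sq_unitary hαβ, norm_mul, norm_expI,
        one_mul]
    obtain ⟨ω, θ₀, φ₀, hU⟩ := exists_Rz_mul_Ry_mul_Rz_eq (a := conj α) (b := conj β)
      (by simpa using hαβ)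
    refine ⟨ω, fun | 0 => θ₀ | n + 1 => θ n, fun | 0 => φ₀ + ω' | n + 1 => φ n, fun x => ?_⟩
    have := expI_ne_zero (x / 2)
    rw [Wqsp_succ_cons, hU, (hPQ' _).1, (hPQ' _).2]
    constructor <;>
    · rw [Matrix.mul_apply, Fin.sum_univ_two, Rz_mul_apply_zero, Rz_mul_apply_one, (hW x).1,
        (hW x).2, ← expI_half_sq x, expI_neg]
      simp only [Complex.conj_conj, Matrix.of_apply, Matrix.cons_val', Matrix.cons_val_zero,
        Matrix.cons_val_one, Matrix.cons_val_fin_one, inv_pow, neg_mul]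
      field_simp
      ring

lemma conjTranspose_mul_pauliZ_mul_apply_zero_zero (M : Matrix (Fin 2) (Fin 2) ℂ) :
    (Mᴴ * (!![1, 0; 0, -1] : Matrix (Fin 2) (Fin 2) ℂ) * M) 0 0 =
      (‖M 0 0‖ ^ 2 - ‖M 1 0‖ ^ 2 : ℝ) := by
  push_cast
  simp [Matrix.mul_apply, Fin.sum_univ_two, ← mul_conj', mul_comm, sub_eq_add_neg]

/-- any real-valued trigonometric polynomial `F` of degree `L` with `|F(x)| ≤ 1`
is realized as the expectation `⟨e₀, W(x)† Z W(x) e₀⟩` of the Pauli-Z observable. -/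
theorem stmt_4 (L : ℕ) (c : ℤ → ℂ) (F : ℝ → ℂ)
    (hF : ∀ x : ℝ, F x =
      ∑ j ∈ Finset.Icc (-(L : ℤ)) (L : ℤ), c j * Complex.exp (Complex.I * j * x))
    (hreal : ∀ x : ℝ, (F x).im = 0)
    (hbound : ∀ x : ℝ, ‖F x‖ ≤ 1) :
    ∃ (ω : ℝ) (θ φ : ℕ → ℝ), ∀ x : ℝ,
      ((Wqsp L ω θ φ x)ᴴ * (!![1, 0; 0, -1] : Matrix (Fin 2) (Fin 2) ℂ) *
        Wqsp L ω θ φ x) 0 0 = F x := by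
  obtain ⟨q, hq, hqF⟩ := exists_trigOf_eq_sum L c
  have hqF' : trigOf L q = F := funext fun x => (hqF x).trans (hF x).symm
  have hFbound (x : ℝ) : -1 ≤ F x ∧ F x ≤ 1 := by
    have hre := abs_le.1 ((abs_re_le_norm (F x)).trans (hbound x))
    rw [← re_add_im (F x), hreal x, ofReal_zero, zero_mul, add_zero]
    exact ⟨by exact_mod_cast hre.1, by exact_mod_cast hre.2⟩
  obtain ⟨P, Q, hP, hQ, hPQ, hqPQ⟩ := exists_trigOf_eq_norm_sq_sub_norm_sq hq (hqF' ▸ hFbound)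
  obtain ⟨ω, θ, φ, hW⟩ := exists_Wqsp_col_eq L hP hQ hPQ
  refine ⟨ω, θ, φ, fun x => ?_⟩
  rw [conjTranspose_mul_pauliZ_mul_apply_zero_zero, (hW x).1, (hW x).2, ← hqF', hqPQ]
  simp [norm_expI]
end

section
/- Let U be an N×N unitary matrix and let χ ∈ ℂ^N be a unit vector with Uχ = e^{iτ}χ for some τ ∈ ℝ. Then for every L ∈ ℕ, ω ∈ ℝ, θ, φ ∈ ℝ^{L+1} and b ∈ {0,1}, the QPP circuit satisfies V^L_{ω,θ,φ}(U)(e_b ⊗ χ) = (e^{−iτ/2})^{L mod 2} · Σ_{b'∈{0,1}} (W^L_{ω,θ,φ}(τ))_{b'b} · (e_{b'} ⊗ χ); that is, each two-dimensional subspace span{e_0 ⊗ χ, e_1 ⊗ χ} attached to an eigenvector χ of U is invariant under V^L(U), on which V^L(U) acts as the 2×2 matrix (e^{−iτ/2})^{L mod 2}·W^L_{ω,θ,φ}(τ). -/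
/-!
If `U χ = e^{iτ} χ`, then also `U† χ = e^{-iτ} χ`, so on `ℂ² ⊗ χ` the controlled layers act as
`B(1, U) = diag(1, e^{iτ}) = e^{iτ/2} R_z(τ)` and `B(U†, 1) = diag(e^{-iτ}, 1) = e^{-iτ/2} R_z(τ)`,
while `R ⊗ I` acts as `R`. In each pair of layers of the circuit the two phases cancel, so the
even circuit acts as `W^{L}(τ)`; the extra layer of an odd circuit leaves one factor `e^{-iτ/2}`.
-/

open scoped Matrix

open scoped Kronecker

/-- Block-diagonal matrix `B(X,Y)` with upper-left block `X` and lower-right block `Y`,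
as a matrix on `ℂ² ⊗ ℂⁿ`. -/
noncomputable def blockDiag2 {n : Type*} [Fintype n] [DecidableEq n]
    (X Y : Matrix n n ℂ) : Matrix (Fin 2 × n) (Fin 2 × n) ℂ :=
  (!![1, 0; 0, 0] : Matrix (Fin 2) (Fin 2) ℂ) ⊗ₖ X +
    (!![0, 0; 0, 1] : Matrix (Fin 2) (Fin 2) ℂ) ⊗ₖ Y

/-- The QPP circuit for an even number `2·halfL` of layers. -/
noncomputable def qppEven {n : Type*} [Fintype n] [DecidableEq n]
    (U : Matrix n n ℂ) (halfL : ℕ) (ω : ℝ) (θ φ : ℕ → ℝ) :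
    Matrix (Fin 2 × n) (Fin 2 × n) ℂ :=
  ((Rz ω * Ry (θ 0) * Rz (φ 0)) ⊗ₖ (1 : Matrix n n ℂ)) *
    ((List.range halfL).map (fun l =>
      blockDiag2 Uᴴ 1 *
        ((Ry (θ (2 * l + 1)) * Rz (φ (2 * l + 1))) ⊗ₖ (1 : Matrix n n ℂ)) *
        blockDiag2 1 U *
        ((Ry (θ (2 * l + 2)) * Rz (φ (2 * l + 2))) ⊗ₖ (1 : Matrix n n ℂ)))).prod

/-- The quantum phase processing (QPP) circuit `V^L_{ω,θ,φ}(U)`: for even `L` it is the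
interleaved product of ancilla rotations and controlled-`U†`, controlled-`U`; for odd `L`
one extra layer `B(U†, I)·(R_y(θ_L) R_z(φ_L) ⊗ I)` is appended. -/
noncomputable def qpp {n : Type*} [Fintype n] [DecidableEq n]
    (U : Matrix n n ℂ) (L : ℕ) (ω : ℝ) (θ φ : ℕ → ℝ) :
    Matrix (Fin 2 × n) (Fin 2 × n) ℂ :=
  if L % 2 = 0 then qppEven U (L / 2) ω θ φ
  else qppEven U (L / 2) ω θ φ * blockDiag2 Uᴴ 1 *
    ((Ry (θ L) * Rz (φ L)) ⊗ₖ (1 : Matrix n n ℂ))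

open Matrix

variable {m n : Type*} [Fintype m] [Fintype n] [DecidableEq n]

def tensorVec (a : m → ℂ) (χ : n → ℂ) : m × n → ℂ :=
  fun p => a p.1 * χ p.2

omit [Fintype m] [Fintype n] [DecidableEq n] in
lemma tensorVec_smul (c : ℂ) (a : m → ℂ) (χ : n → ℂ) :
    tensorVec (c • a) χ = c • tensorVec a χ := by
  funext p; simp [tensorVec, mul_assoc]

omit [Fintype n] [DecidableEq n] in
lemma tensorVec_mulVec_indicator [DecidableEq m] (M : Matrix m m ℂ) (b : m) (χ : n → ℂ) :
    tensorVec (M *ᵥ fun c => if c = b then 1 else 0) χ =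
      ∑ b', M b' b • tensorVec (fun c => if c = b' then 1 else 0) χ := by
  funext ⟨c, i⟩
  simp [tensorVec, mulVec, dotProduct, Finset.sum_apply]

lemma kronecker_one_mulVec_tensorVec [DecidableEq m] (A : Matrix m m ℂ) (a : m → ℂ)
    (χ : n → ℂ) :
    (A ⊗ₖ (1 : Matrix n n ℂ)) *ᵥ tensorVec a χ = tensorVec (A *ᵥ a) χ := by
  funext p
  simp [mulVec, dotProduct, tensorVec, Fintype.sum_prod_type, one_apply, Finset.sum_mul,
    mul_assoc]

lemma blockDiag2_mulVec_tensorVec {X Y : Matrix n n ℂ} {χ : n → ℂ} {α β : ℂ}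
    (hX : X *ᵥ χ = α • χ) (hY : Y *ᵥ χ = β • χ) (a : Fin 2 → ℂ) :
    blockDiag2 X Y *ᵥ tensorVec a χ = tensorVec (diagonal ![α, β] *ᵥ a) χ := by
  funext ⟨c, i⟩
  have hXi := congrFun hX i
  have hYi := congrFun hY i
  simp only [mulVec, dotProduct, Pi.smul_apply, smul_eq_mul] at hXi hYi
  fin_cases c <;>
  · simp [blockDiag2, mulVec, dotProduct, tensorVec, Fintype.sum_prod_type,
      Fin.sum_univ_two]
    simp only [mul_left_comm _ (a _), ← Finset.mul_sum, hXi, hYi]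
    ring

lemma conjTranspose_mulVec_of_mulVec_eq_smul {U : Matrix n n ℂ}
    (hU : U ∈ unitaryGroup n ℂ) {χ : n → ℂ} {μ : ℂ} (hμ : μ ≠ 0) (heig : U *ᵥ χ = μ • χ) :
    Uᴴ *ᵥ χ = μ⁻¹ • χ := by
  have h : μ • (Uᴴ *ᵥ χ) = χ := by
    rw [← mulVec_smul, ← heig, mulVec_mulVec, ← star_eq_conjTranspose, hU.1, one_mulVec]
  calc Uᴴ *ᵥ χ = μ⁻¹ • μ • (Uᴴ *ᵥ χ) := by rw [smul_smul, inv_mul_cancel₀ hμ, one_smul]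
    _ = μ⁻¹ • χ := by rw [h]

lemma diagonal_one_exp_eq_smul_Rz (τ : ℝ) :
    diagonal ![1, Complex.exp (Complex.I * τ)] = Complex.exp (Complex.I * τ / 2) • Rz τ := by
  ext i j
  fin_cases i <;> fin_cases j <;> simp [Rz, ← Complex.exp_add]

lemma diagonal_exp_neg_one_eq_smul_Rz (τ : ℝ) :
    diagonal ![Complex.exp (-(Complex.I * τ)), 1] =
      Complex.exp (-(Complex.I * τ / 2)) • Rz τ := by
  ext i j
  fin_cases i <;> fin_cases j <;> simp [Rz, ← Complex.exp_add]; ring_nf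

lemma Wqsp_succ (L : ℕ) (ω : ℝ) (θ φ : ℕ → ℝ) (x : ℝ) :
    Wqsp (L + 1) ω θ φ x = Wqsp L ω θ φ x * (Rz x * Ry (θ (L + 1)) * Rz (φ (L + 1))) := by
  simp [Wqsp, List.range_succ, mul_assoc]

lemma qppEven_succ (U : Matrix n n ℂ) (h : ℕ) (ω : ℝ) (θ φ : ℕ → ℝ) :
    qppEven U (h + 1) ω θ φ = qppEven U h ω θ φ *
      (blockDiag2 Uᴴ 1 * ((Ry (θ (2 * h + 1)) * Rz (φ (2 * h + 1))) ⊗ₖ (1 : Matrix n n ℂ)) *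
        blockDiag2 1 U * ((Ry (θ (2 * h + 2)) * Rz (φ (2 * h + 2))) ⊗ₖ (1 : Matrix n n ℂ))) := by
  simp [qppEven, List.range_succ, mul_assoc]

section Eigenvector

variable {U : Matrix n n ℂ} {χ : n → ℂ} {τ : ℝ}

lemma blockDiag2_one_mulVec_tensorVec (heig : U *ᵥ χ = Complex.exp (Complex.I * τ) • χ)
    (a : Fin 2 → ℂ) :
    blockDiag2 1 U *ᵥ tensorVec a χ =
      Complex.exp (Complex.I * τ / 2) • tensorVec (Rz τ *ᵥ a) χ := by
  rw [blockDiag2_mulVec_tensorVec (α := 1) (by simp) heig, diagonal_one_exp_eq_smul_Rz,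
    smul_mulVec, tensorVec_smul]

lemma blockDiag2_conjTranspose_mulVec_tensorVec (hU : U ∈ unitaryGroup n ℂ)
    (heig : U *ᵥ χ = Complex.exp (Complex.I * τ) • χ) (a : Fin 2 → ℂ) :
    blockDiag2 Uᴴ 1 *ᵥ tensorVec a χ =
      Complex.exp (-(Complex.I * τ / 2)) • tensorVec (Rz τ *ᵥ a) χ := by
  have hUH : Uᴴ *ᵥ χ = Complex.exp (-(Complex.I * τ)) • χ := by
    rw [Complex.exp_neg]
    exact conjTranspose_mulVec_of_mulVec_eq_smul hU (Complex.exp_ne_zero _) heig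
  rw [blockDiag2_mulVec_tensorVec (β := 1) hUH (by simp), diagonal_exp_neg_one_eq_smul_Rz,
    smul_mulVec, tensorVec_smul]

lemma qppEven_mulVec_tensorVec (hU : U ∈ unitaryGroup n ℂ)
    (heig : U *ᵥ χ = Complex.exp (Complex.I * τ) • χ) (ω : ℝ) (θ φ : ℕ → ℝ) (h : ℕ)
    (a : Fin 2 → ℂ) :
    qppEven U h ω θ φ *ᵥ tensorVec a χ = tensorVec (Wqsp (2 * h) ω θ φ τ *ᵥ a) χ := by
  induction h generalizing a with
  | zero => simp [qppEven, Wqsp, kronecker_one_mulVec_tensorVec]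
  | succ h ih =>
    simp only [qppEven_succ, ← mulVec_mulVec, kronecker_one_mulVec_tensorVec,
      blockDiag2_one_mulVec_tensorVec heig, mulVec_smul,
      blockDiag2_conjTranspose_mulVec_tensorVec hU heig, smul_smul, ih]
    rw [← Complex.exp_add, add_neg_cancel, Complex.exp_zero, one_smul,
      show 2 * (h + 1) = 2 * h + 1 + 1 by ring, Wqsp_succ, Wqsp_succ]
    simp only [mulVec_mulVec, mul_assoc]

lemma qpp_mulVec_tensorVec (hU : U ∈ unitaryGroup n ℂ)
    (heig : U *ᵥ χ = Complex.exp (Complex.I * τ) • χ) (L : ℕ) (ω : ℝ) (θ φ : ℕ → ℝ)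
    (a : Fin 2 → ℂ) :
    qpp U L ω θ φ *ᵥ tensorVec a χ =
      Complex.exp (-(Complex.I * τ / 2)) ^ (L % 2) • tensorVec (Wqsp L ω θ φ τ *ᵥ a) χ := by
  obtain ⟨k, rfl | rfl⟩ := Nat.even_or_odd' L
  · simp [qpp, qppEven_mulVec_tensorVec hU heig]
  · have hmod : (2 * k + 1) % 2 = 1 := by omega
    have hdiv : (2 * k + 1) / 2 = k := by omega
    rw [qpp, if_neg (by omega), hmod, hdiv, ← mulVec_mulVec, ← mulVec_mulVec,
      kronecker_one_mulVec_tensorVec, blockDiag2_conjTranspose_mulVec_tensorVec hU heig,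
      mulVec_smul, qppEven_mulVec_tensorVec hU heig, pow_one, Wqsp_succ]
    simp only [mulVec_mulVec, mul_assoc]

end Eigenvector

theorem stmt_5_general (N : ℕ) (U : Matrix (Fin N) (Fin N) ℂ)
    (hU : U ∈ Matrix.unitaryGroup (Fin N) ℂ)
    (χ : Fin N → ℂ) (τ : ℝ)
    (heig : U.mulVec χ = Complex.exp (Complex.I * τ) • χ)
    (L : ℕ) (ω : ℝ) (θ φ : ℕ → ℝ) (b : Fin 2) :
    (qpp U L ω θ φ).mulVec
        (fun bi : Fin 2 × Fin N => (if bi.1 = b then 1 else 0) * χ bi.2) =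
      Complex.exp (-(Complex.I * τ / 2)) ^ (L % 2) •
        ∑ b' : Fin 2, Wqsp L ω θ φ τ b' b •
          (fun bi : Fin 2 × Fin N => (if bi.1 = b' then 1 else 0) * χ bi.2) := by
  have h := qpp_mulVec_tensorVec hU heig L ω θ φ (fun c => if c = b then 1 else 0)
  rw [tensorVec_mulVec_indicator] at h
  exact h

/-- eigenspace decomposition of QPP. On the two-dimensional subspace attached to
an eigenvector `χ` of `U` with eigenphase `τ`, the QPP circuit acts as
`(e^{-iτ/2})^{L mod 2} · W^L(τ)`. -/
theorem stmt_5 (N : ℕ) (U : Matrix (Fin N) (Fin N) ℂ)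
    (hU : U ∈ Matrix.unitaryGroup (Fin N) ℂ)
    (χ : Fin N → ℂ) (hχ : ∑ i, ‖χ i‖ ^ 2 = 1) (τ : ℝ)
    (heig : U.mulVec χ = Complex.exp (Complex.I * τ) • χ)
    (L : ℕ) (ω : ℝ) (θ φ : ℕ → ℝ) (b : Fin 2) :
    (qpp U L ω θ φ).mulVec
        (fun bi : Fin 2 × Fin N => (if bi.1 = b then 1 else 0) * χ bi.2) =
      Complex.exp (-(Complex.I * τ / 2)) ^ (L % 2) •
        ∑ b' : Fin 2, Wqsp L ω θ φ τ b' b •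
          (fun bi : Fin 2 × Fin N => (if bi.1 = b' then 1 else 0) * χ bi.2) :=
  stmt_5_general N U hU χ τ heig L ω θ φ b
end
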